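/- arXiv:2601.07249 — 12 statements merged into one kernel-verified Lean document; each statement's English description precedes it below -/
import Mathlib

section
/- Fix α, β, λ > 0. The CLFRD density integrates to one: ∫_0^∞ (α + βx)·(1 + λ·exp(-αx - (β/2)x²))·exp(-αx - (β/2)x² - λ + λ·exp(-αx - (β/2)x²)) dx = 1. -/
open MeasureTheory Filter

/-- The CLFRD density integrates to one over `(0, ∞)`. -/
theorem clfrd_density_integrates_to_one (α β lam : ℝ)
    (hα : 0 < α) (hβ : 0 < β) (hlam : 0 < lam) :
    ∫ x in Set.Ioi (0 : ℝ),
      (α + β * x) * (1 + lam * Real.exp (-α * x - β / 2 * x ^ 2)) *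
        Real.exp (-α * x - β / 2 * x ^ 2 - lam +
          lam * Real.exp (-α * x - β / 2 * x ^ 2)) = 1 := by
  set T : ℝ → ℝ := fun x => -α * x - β / 2 * x ^ 2 with hTdef
  set g : ℝ → ℝ := fun x => -Real.exp (T x - lam + lam * Real.exp (T x)) with hgdef
  have hTd : ∀ x : ℝ, HasDerivAt T (-α - β * x) x := by
    intro x
    have h1 : HasDerivAt (fun x : ℝ => -α * x) (-α) x := by
      simpa using (hasDerivAt_id x).const_mul (-α)
    have h2 : HasDerivAt (fun x : ℝ => β / 2 * x ^ 2) (β / 2 * (2 * x)) x := by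
      simpa using (hasDerivAt_pow 2 x).const_mul (β / 2)
    have := h1.sub h2
    refine this.congr_deriv ?_
    ring
  have hderiv : ∀ x : ℝ, HasDerivAt g
      ((α + β * x) * (1 + lam * Real.exp (T x)) *
        Real.exp (T x - lam + lam * Real.exp (T x))) x := by
    intro x
    have hu : HasDerivAt (fun x => T x - lam + lam * Real.exp (T x))
        ((-α - β * x) + lam * (Real.exp (T x) * (-α - β * x))) x := by
      exact ((hTd x).sub_const lam).add (((hTd x).exp).const_mul lam)
    have := (hu.exp).neg
    refine this.congr_deriv ?_
    ring
  have hnonneg : ∀ x ∈ Set.Ioi (0 : ℝ), 0 ≤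
      (α + β * x) * (1 + lam * Real.exp (T x)) *
        Real.exp (T x - lam + lam * Real.exp (T x)) := by
    intro x hx
    have hx0 : (0 : ℝ) < x := hx
    positivity
  have hTbot : Tendsto T atTop atBot := by
    have hle : T ≤ᶠ[atTop] fun x => -(α * x) := by
      filter_upwards [eventually_ge_atTop (0 : ℝ)] with x hx
      have : 0 ≤ β / 2 * x ^ 2 := by positivity
      simp only [hTdef]
      nlinarith
    exact tendsto_atBot_mono' atTop hle (tendsto_neg_atTop_atBot.comp (tendsto_id.const_mul_atTop hα))
  have hhbot : Tendsto (fun x => T x - lam + lam * Real.exp (T x)) atTop atBot := by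
    have hle : (fun x => T x - lam + lam * Real.exp (T x)) ≤ᶠ[atTop] T := by
      filter_upwards [hTbot.eventually (eventually_le_atBot (0 : ℝ))] with x hx
      have h1 : Real.exp (T x) ≤ 1 := Real.exp_le_one_iff.mpr hx
      nlinarith
    exact tendsto_atBot_mono' atTop hle hTbot
  have hgl : Tendsto g atTop (nhds 0) := by
    have := (Real.tendsto_exp_atBot.comp hhbot).neg
    simpa using this
  have key := integral_Ioi_of_hasDerivAt_of_nonneg
    (g := g)
    (g' := fun x => (α + β * x) * (1 + lam * Real.exp (T x)) *
        Real.exp (T x - lam + lam * Real.exp (T x)))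
    (a := 0) (hderiv 0).continuousAt.continuousWithinAt
    (fun x _ => hderiv x) hnonneg hgl
  have hg0 : g 0 = -1 := by
    simp [hgdef, hTdef]
  rw [key, hg0]
  ring
end

section
/- Fix α, β, λ > 0 and suppose α² < β(1+λ)/(λ + (1+λ)²). Then the CLFRD density g is unimodal on [0, ∞): there exists x₀ > 0 such that g is monotonically increasing on [0, x₀] and monotonically decreasing on [x₀, ∞). (Theorem 1(i).) -/
open Set Real Filter Topology

noncomputable def clfrdE (α β lam : ℝ) (x : ℝ) : ℝ :=
  lam * Real.exp (-α * x - β / 2 * x ^ 2)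

noncomputable def clfrdD (α β lam : ℝ) (x : ℝ) : ℝ :=
  β * (1 + clfrdE α β lam x) - (α + β * x) ^ 2 * clfrdE α β lam x
    - (α + β * x) ^ 2 * (1 + clfrdE α β lam x) ^ 2

noncomputable def clfrdD' (α β lam : ℝ) (x : ℝ) : ℝ :=
  (α + β * x) * ((α + β * x) ^ 2 * clfrdE α β lam x * (3 + 2 * clfrdE α β lam x)
    - 3 * β * clfrdE α β lam x - 2 * β * (1 + clfrdE α β lam x) ^ 2)

lemma clfrdE_pos {α β lam : ℝ} (hlam : 0 < lam) (x : ℝ) : 0 < clfrdE α β lam x :=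
  mul_pos hlam (Real.exp_pos _)

lemma hasDerivAt_clfrdE (α β lam : ℝ) (x : ℝ) :
    HasDerivAt (clfrdE α β lam) (clfrdE α β lam x * (-(α + β * x))) x := by
  have h1 : HasDerivAt (fun x : ℝ => -α * x - β / 2 * x ^ 2) (-α - β / 2 * (2 * x)) x := by
    have := ((hasDerivAt_id x).const_mul (-α)).fun_sub
      (((hasDerivAt_pow 2 x)).const_mul (β / 2))
    refine this.congr_deriv ?_
    ring
  have h2 := (h1.exp).const_mul lam
  refine h2.congr_deriv ?_
  simp [clfrdE]
  ring

lemma hasDerivAt_clfrdD (α β lam : ℝ) (x : ℝ) :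
    HasDerivAt (clfrdD α β lam) (clfrdD' α β lam x) x := by
  have hu : HasDerivAt (fun x : ℝ => (α + β * x) ^ 2) (2 * (α + β * x) ^ 1 * β) x := by
    have := ((hasDerivAt_const x α).fun_add ((hasDerivAt_id x).const_mul β)).fun_pow 2
    simpa using this
  have hE := hasDerivAt_clfrdE α β lam x
  have h1 : HasDerivAt (fun x : ℝ => 1 + clfrdE α β lam x)
      (clfrdE α β lam x * (-(α + β * x))) x := by
    simpa using (hasDerivAt_const x 1).fun_add hE
  have h2 := h1.pow 2
  have hfull := (((hasDerivAt_const x (1:ℝ)).fun_add hE).const_mul β).fun_sub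
    ((hu.fun_mul hE).fun_add (hu.fun_mul h2))
  have : clfrdD α β lam = fun x => β * (1 + clfrdE α β lam x)
      - ((α + β * x) ^ 2 * clfrdE α β lam x + (α + β * x) ^ 2 * (1 + clfrdE α β lam x) ^ 2) := by
    funext y; simp [clfrdD]; ring
  rw [this]
  refine hfull.congr_deriv ?_
  simp [clfrdD']
  ring

lemma hasDerivAt_g (α β lam : ℝ) (x : ℝ) :
    HasDerivAt (fun x => (α + β * x) * (1 + lam * Real.exp (-α * x - β / 2 * x ^ 2)) *
      Real.exp (-α * x - β / 2 * x ^ 2 - lam + lam * Real.exp (-α * x - β / 2 * x ^ 2)))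
      (Real.exp (-α * x - β / 2 * x ^ 2 - lam + lam * Real.exp (-α * x - β / 2 * x ^ 2)) *
        clfrdD α β lam x) x := by
  have h1 : HasDerivAt (fun x : ℝ => -α * x - β / 2 * x ^ 2) (-α - β / 2 * (2 * x)) x := by
    have := ((hasDerivAt_id x).const_mul (-α)).fun_sub
      (((hasDerivAt_pow 2 x)).const_mul (β / 2))
    refine this.congr_deriv ?_
    ring
  have hE : HasDerivAt (fun x : ℝ => lam * Real.exp (-α * x - β / 2 * x ^ 2))
      (lam * (Real.exp (-α * x - β / 2 * x ^ 2) * (-α - β / 2 * (2 * x)))) x :=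
    (h1.exp).const_mul lam
  have hu : HasDerivAt (fun x : ℝ => α + β * x) β x := by
    simpa using (hasDerivAt_const x α).fun_add ((hasDerivAt_id x).const_mul β)
  have hS : HasDerivAt (fun x : ℝ => -α * x - β / 2 * x ^ 2 - lam
      + lam * Real.exp (-α * x - β / 2 * x ^ 2))
      ((-α - β / 2 * (2 * x)) + lam * (Real.exp (-α * x - β / 2 * x ^ 2)
        * (-α - β / 2 * (2 * x)))) x := by
    simpa using ((h1.sub_const lam).fun_add hE)
  have hfull := ((hu.fun_mul ((hasDerivAt_const x (1:ℝ)).fun_add hE)).fun_mul hS.exp)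
  refine hfull.congr_deriv ?_
  simp [clfrdD, clfrdE]
  ring

lemma continuous_clfrdD (α β lam : ℝ) : Continuous (clfrdD α β lam) := by
  unfold clfrdD clfrdE
  fun_prop

lemma clfrd_key_ineq {β s A : ℝ} (hβ : 0 < β) (hs : 0 ≤ s)
    (h : 0 ≤ β * (1 + s) - A * s - A * (1 + s) ^ 2) (hA : 0 ≤ A) :
    A * s * (3 + 2 * s) - 3 * β * s - 2 * β * (1 + s) ^ 2 < 0 := by
  nlinarith [mul_le_mul_of_nonneg_right (by nlinarith : A * (s + (1+s)^2) ≤ β * (1 + s))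
      (by positivity : (0:ℝ) ≤ s * (3 + 2 * s)),
    mul_pos hβ (by positivity : (0:ℝ) < 2*s^4 + 11*s^3 + 20*s^2 + 10*s + 2),
    mul_nonneg hA hs, sq_nonneg s, sq_nonneg (1+s)]

lemma clfrdD'_neg {α β lam : ℝ} (hβ : 0 < β) (hα : 0 < α) (hlam : 0 < lam)
    {c : ℝ} (hc : 0 ≤ c) (hD : 0 ≤ clfrdD α β lam c) : clfrdD' α β lam c < 0 := by
  have hu : 0 < α + β * c := by nlinarith
  have hs := (clfrdE_pos (α := α) (β := β) hlam c).le
  unfold clfrdD at hD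
  have key := clfrd_key_ineq hβ hs hD (sq_nonneg (α + β * c))
  unfold clfrdD'
  exact mul_neg_of_pos_of_neg hu key

lemma clfrd_right_dec {α β lam : ℝ} (hβ : 0 < β) (hα : 0 < α) (hlam : 0 < lam)
    {c : ℝ} (hc : 0 ≤ c) (hD : clfrdD α β lam c = 0) :
    ∀ᶠ y in 𝓝[>] c, clfrdD α β lam y < 0 := by
  have hd := hasDerivAt_clfrdD α β lam c
  have hneg := clfrdD'_neg hβ hα hlam hc hD.ge
  have hslope : Tendsto (slope (clfrdD α β lam) c) (𝓝[>] c) (𝓝 (clfrdD' α β lam c)) :=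
    (hasDerivAt_iff_tendsto_slope.mp hd).mono_left
      (nhdsWithin_mono c (fun y hy => ne_of_gt hy))
  filter_upwards [hslope.eventually_lt_const hneg, self_mem_nhdsWithin] with y hy hyc
  rw [slope_def_field, hD, sub_zero] at hy
  rcases div_neg_iff.mp hy with ⟨h1, h2⟩ | ⟨h1, h2⟩
  · exact absurd (sub_pos.mpr (mem_Ioi.mp hyc)) (not_lt.mpr h2.le)
  · exact h1

lemma clfrd_left_inc {α β lam : ℝ} (hβ : 0 < β) (hα : 0 < α) (hlam : 0 < lam)
    {c : ℝ} (hc : 0 ≤ c) (hD : clfrdD α β lam c = 0) :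
    ∀ᶠ y in 𝓝[<] c, 0 < clfrdD α β lam y := by
  have hd := hasDerivAt_clfrdD α β lam c
  have hneg := clfrdD'_neg hβ hα hlam hc hD.ge
  have hslope : Tendsto (slope (clfrdD α β lam) c) (𝓝[<] c) (𝓝 (clfrdD' α β lam c)) :=
    (hasDerivAt_iff_tendsto_slope.mp hd).mono_left
      (nhdsWithin_mono c (fun y hy => ne_of_lt hy))
  filter_upwards [hslope.eventually_lt_const hneg, self_mem_nhdsWithin] with y hy hyc
  rw [slope_def_field, hD, sub_zero] at hy
  rcases div_neg_iff.mp hy with ⟨h1, h2⟩ | ⟨h1, h2⟩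
  · exact h1
  · exact absurd (sub_neg.mpr (mem_Iio.mp hyc)) (not_lt.mpr h2.le)

lemma clfrd_neg_propagate {α β lam : ℝ} (hβ : 0 < β) (hα : 0 < α) (hlam : 0 < lam)
    {a : ℝ} (ha : 0 ≤ a) (hDa : clfrdD α β lam a ≤ 0) :
    ∀ b, a < b → clfrdD α β lam b < 0 := by
  by_contra h
  push_neg at h
  obtain ⟨b, hab, hDb⟩ := h
  obtain ⟨b', hab', hDb'⟩ : ∃ b', a < b' ∧ 0 < clfrdD α β lam b' := by
    rcases hDb.lt_or_eq with h | h
    · exact ⟨b, hab, h⟩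
    · have hev := clfrd_left_inc hβ hα hlam (ha.trans hab.le) h.symm
      have hmem : ∀ᶠ y in nhdsWithin b (Iio b), y ∈ Ioo a b := Ioo_mem_nhdsLT hab
      obtain ⟨y, hy1, hy2⟩ := (hev.and hmem).exists
      exact ⟨y, hy2.1, hy1⟩
  set T := Icc a b' ∩ {x | clfrdD α β lam x ≤ 0} with hT
  have hTne : a ∈ T := ⟨⟨le_refl a, hab'.le⟩, hDa⟩
  have hTclosed : IsClosed T :=
    isClosed_Icc.inter (isClosed_le (continuous_clfrdD α β lam) continuous_const)
  have hTbdd : BddAbove T := ⟨b', fun x hx => hx.1.2⟩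
  set c := sSup T with hc
  have hcT : c ∈ T := hTclosed.csSup_mem ⟨a, hTne⟩ hTbdd
  have hac : a ≤ c := hcT.1.1
  have hcb : c < b' := by
    rcases hcT.1.2.lt_or_eq with h | h
    · exact h
    · exact absurd (h ▸ hcT.2) (not_le.mpr hDb')
  have hpos : ∀ y ∈ Ioc c b', 0 < clfrdD α β lam y := by
    intro y hy
    by_contra hny
    push_neg at hny
    have hyT : y ∈ T := ⟨⟨hac.trans hy.1.le, hy.2⟩, hny⟩
    exact absurd (le_csSup hTbdd hyT) (not_le.mpr hy.1)
  have hDc0 : clfrdD α β lam c = 0 := by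
    refine le_antisymm hcT.2 ?_
    have htend : Filter.Tendsto (clfrdD α β lam) (nhdsWithin c (Ioi c))
        (nhds (clfrdD α β lam c)) :=
      ((continuous_clfrdD α β lam).tendsto c).mono_left nhdsWithin_le_nhds
    refine ge_of_tendsto htend ?_
    have hmem : ∀ᶠ y in nhdsWithin c (Ioi c), y ∈ Ioc c b' := Ioc_mem_nhdsGT hcb
    filter_upwards [hmem] with y hy
    exact (hpos y hy).le
  have hev := clfrd_right_dec hβ hα hlam (ha.trans hac) hDc0
  have hmem : ∀ᶠ y in nhdsWithin c (Ioi c), y ∈ Ioc c b' := Ioc_mem_nhdsGT hcb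
  obtain ⟨y, hy1, hy2⟩ := (hev.and hmem).exists
  exact absurd (hpos y hy2) (not_lt.mpr hy1.le)

/-- Theorem 1(i): if `α² < β(1+λ)/(λ + (1+λ)²)` then the CLFRD density is unimodal on
`[0, ∞)`: increasing up to some `x₀ > 0` and decreasing afterwards. -/
theorem clfrd_density_unimodal (α β lam : ℝ) (hα : 0 < α) (hβ : 0 < β) (hlam : 0 < lam)
    (g : ℝ → ℝ)
    (hg : ∀ x, g x = (α + β * x) * (1 + lam * Real.exp (-α * x - β / 2 * x ^ 2)) *
      Real.exp (-α * x - β / 2 * x ^ 2 - lam + lam * Real.exp (-α * x - β / 2 * x ^ 2)))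
    (hcond : α ^ 2 < β * (1 + lam) / (lam + (1 + lam) ^ 2)) :
    ∃ x₀ : ℝ, 0 < x₀ ∧ MonotoneOn g (Icc 0 x₀) ∧ AntitoneOn g (Ici x₀) := by
  have hgfun : g = fun x => (α + β * x) * (1 + lam * Real.exp (-α * x - β / 2 * x ^ 2)) *
      Real.exp (-α * x - β / 2 * x ^ 2 - lam + lam * Real.exp (-α * x - β / 2 * x ^ 2)) :=
    funext hg
  -- D is positive at 0
  have hD0 : 0 < clfrdD α β lam 0 := by
    have hden : (0:ℝ) < lam + (1 + lam) ^ 2 := by positivity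
    rw [lt_div_iff₀ hden] at hcond
    unfold clfrdD clfrdE
    norm_num
    nlinarith [hcond]
  -- D is negative at x₁
  set x₁ : ℝ := (1 + lam + β) / β with hx₁def
  have hx₁pos : 0 < x₁ := by positivity
  have hbx : β * x₁ = 1 + lam + β := by
    rw [hx₁def]; field_simp
  have hx₁neg : clfrdD α β lam x₁ < 0 := by
    have hs0 : 0 < clfrdE α β lam x₁ := clfrdE_pos hlam x₁
    have hsl : clfrdE α β lam x₁ ≤ lam := by
      unfold clfrdE
      have h1 : Real.exp (-α * x₁ - β / 2 * x₁ ^ 2) ≤ 1 := by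
        rw [Real.exp_le_one_iff]
        nlinarith [sq_nonneg x₁]
      nlinarith [h1]
    unfold clfrdD
    nlinarith [hs0, hsl, hbx, sq_nonneg (1 + clfrdE α β lam x₁),
      sq_nonneg (α + β * x₁), sq_nonneg (α + lam), mul_pos hβ hlam,
      sq_nonneg (clfrdE α β lam x₁)]
  -- the crossing point
  set S : Set ℝ := {x : ℝ | 0 ≤ x} ∩ {x : ℝ | clfrdD α β lam x ≤ 0} with hS
  have hSne : x₁ ∈ S := ⟨hx₁pos.le, hx₁neg.le⟩
  have hSbdd : BddBelow S := ⟨0, fun x hx => hx.1⟩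
  have hSclosed : IsClosed S :=
    (isClosed_le continuous_const continuous_id).inter
      (isClosed_le (continuous_clfrdD α β lam) continuous_const)
  set x₀ : ℝ := sInf S with hx₀def
  have hx₀S : x₀ ∈ S := hSclosed.csInf_mem ⟨x₁, hSne⟩ hSbdd
  have hx₀pos : 0 < x₀ := by
    obtain ⟨δ, hδpos, hδ⟩ := Metric.continuousAt_iff.mp
      ((continuous_clfrdD α β lam).continuousAt (x := 0)) (clfrdD α β lam 0) hD0
    have hle : δ / 2 ≤ x₀ := by
      refine le_csInf ⟨x₁, hSne⟩ ?_
      intro x hx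
      by_contra hlt
      push_neg at hlt
      have hd : dist x 0 < δ := by
        rw [Real.dist_eq, sub_zero, abs_of_nonneg hx.1]
        linarith
      have := hδ hd
      rw [Real.dist_eq] at this
      have := abs_lt.mp this
      have : 0 < clfrdD α β lam x := by linarith [this.1]
      exact absurd hx.2 (not_le.mpr this)
    linarith
  have hDpos : ∀ x, 0 ≤ x → x < x₀ → 0 < clfrdD α β lam x := by
    intro x hx hxlt
    by_contra h
    push_neg at h
    exact absurd (csInf_le hSbdd ⟨hx, h⟩) (not_le.mpr hxlt)
  have hDneg : ∀ x, x₀ < x → clfrdD α β lam x < 0 := fun x hx =>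
    clfrd_neg_propagate hβ hα hlam hx₀S.1 hx₀S.2 x hx
  have hdiff : Differentiable ℝ (fun x => (α + β * x) *
      (1 + lam * Real.exp (-α * x - β / 2 * x ^ 2)) *
      Real.exp (-α * x - β / 2 * x ^ 2 - lam + lam * Real.exp (-α * x - β / 2 * x ^ 2))) :=
    fun x => (hasDerivAt_g α β lam x).differentiableAt
  refine ⟨x₀, hx₀pos, ?_, ?_⟩
  · rw [hgfun]
    refine monotoneOn_of_deriv_nonneg (convex_Icc 0 x₀) hdiff.continuous.continuousOn
      (hdiff.differentiableOn) ?_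
    intro x hx
    rw [interior_Icc] at hx
    rw [(hasDerivAt_g α β lam x).deriv]
    exact le_of_lt (mul_pos (Real.exp_pos _) (hDpos x hx.1.le hx.2))
  · rw [hgfun]
    refine antitoneOn_of_deriv_nonpos (convex_Ici x₀) hdiff.continuous.continuousOn
      (hdiff.differentiableOn) ?_
    intro x hx
    rw [interior_Ici] at hx
    rw [(hasDerivAt_g α β lam x).deriv]
    exact le_of_lt (mul_neg_of_pos_of_neg (Real.exp_pos _) (hDneg x hx))
end

section
/- Fix α, β, λ > 0 and suppose α² ≥ β(1+λ)/(λ + (1+λ)²). Then the CLFRD density g is monotonically decreasing on [0, ∞). (Theorem 1(ii).) -/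
open Set

lemma Qpos (l T : ℝ) (hl : 0 < l) (hT : 0 ≤ T) (hT2 : T ≤ 1/2) :
    (1+l)*(l^2+3*l+1) ≤ ((1+l)+2*T*(l^2+3*l+1))*(l^2*(1-T)^2+3*l*(1-T)+1) := by
  nlinarith [mul_nonneg hT (mul_nonneg (sub_nonneg.2 hT2) (by positivity : (0:ℝ) ≤ 6*l+21*l^2+17*l^3+4*l^4)),
    mul_nonneg (mul_nonneg (mul_nonneg hT hT) hT) (by positivity : (0:ℝ) ≤ 2*l^2+6*l^3+2*l^4),
    mul_nonneg hT (by positivity : (0:ℝ) ≤ 4+12*l+13*l^2+3*l^3)]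

lemma core_ineq (β lam α2 T s : ℝ) (hβ : 0 < β) (hlam : 0 < lam) (hα2 : 0 ≤ α2)
    (hT0 : 0 ≤ T) (hs0 : 0 < s) (hsl : s ≤ lam) (hsge : lam * (1 - T) ≤ s)
    (hcond' : β * (1 + lam) ≤ α2 * (lam ^ 2 + 3 * lam + 1)) :
    β * (1 + s) ≤ (α2 + 2 * β * T) * (s + (1 + s) ^ 2) := by
  have hP : (0:ℝ) < lam ^ 2 + 3 * lam + 1 := by positivity
  by_cases hc : lam ^ 2 + 2 * lam ≤ 2 * T * (lam ^ 2 + 3 * lam + 1)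
  · have h1 : β ≤ α2 + 2 * β * T := by
      have h3 : β * (lam ^ 2 + 3 * lam + 1) ≤ (α2 + 2 * β * T) * (lam ^ 2 + 3 * lam + 1) := by
        nlinarith [mul_le_mul_of_nonneg_left hc hβ.le]
      exact le_of_mul_le_mul_right h3 hP
    nlinarith [mul_le_mul_of_nonneg_right h1 (show (0:ℝ) ≤ s + (1+s)^2 by positivity),
      mul_nonneg hβ.le (mul_nonneg hs0.le hs0.le), mul_nonneg hβ.le hs0.le]
  · push_neg at hc
    have hThalf : T ≤ 1/2 := by
      by_contra h
      push_neg at h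
      nlinarith [mul_pos (show (0:ℝ) < T - 1/2 from by linarith) hP]
    have hQ := Qpos lam T hlam hT0 hThalf
    have hσ0 : 0 ≤ lam * (1 - T) := by nlinarith
    have hmono : lam ^ 2 * (1 - T) ^ 2 + 3 * lam * (1 - T) + 1 ≤ s ^ 2 + 3 * s + 1 := by
      nlinarith [hsge, hσ0, mul_self_le_mul_self hσ0 hsge]
    have h3 : β * ((1 + lam) + 2 * T * (lam ^ 2 + 3 * lam + 1)) ≤
        (α2 + 2 * β * T) * (lam ^ 2 + 3 * lam + 1) := by
      nlinarith [hcond']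
    have hσpoly : (0:ℝ) ≤ lam ^ 2 * (1 - T) ^ 2 + 3 * lam * (1 - T) + 1 := by nlinarith
    have hA2 : (0:ℝ) ≤ α2 + 2 * β * T := by positivity
    have chain : β * (1 + s) * (lam ^ 2 + 3 * lam + 1) ≤
        (α2 + 2 * β * T) * (s + (1 + s) ^ 2) * (lam ^ 2 + 3 * lam + 1) := by
      calc β * (1 + s) * (lam ^ 2 + 3 * lam + 1)
          ≤ β * (1 + lam) * (lam ^ 2 + 3 * lam + 1) := by
            exact mul_le_mul_of_nonneg_right
              (mul_le_mul_of_nonneg_left (by linarith) hβ.le) hP.le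
        _ = β * ((1 + lam) * (lam ^ 2 + 3 * lam + 1)) := by ring
        _ ≤ β * (((1 + lam) + 2 * T * (lam ^ 2 + 3 * lam + 1)) *
              (lam ^ 2 * (1 - T) ^ 2 + 3 * lam * (1 - T) + 1)) :=
            mul_le_mul_of_nonneg_left hQ hβ.le
        _ = β * ((1 + lam) + 2 * T * (lam ^ 2 + 3 * lam + 1)) *
              (lam ^ 2 * (1 - T) ^ 2 + 3 * lam * (1 - T) + 1) := by ring
        _ ≤ (α2 + 2 * β * T) * (lam ^ 2 + 3 * lam + 1) *
              (lam ^ 2 * (1 - T) ^ 2 + 3 * lam * (1 - T) + 1) :=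
            mul_le_mul_of_nonneg_right h3 hσpoly
        _ = (α2 + 2 * β * T) * (lam ^ 2 * (1 - T) ^ 2 + 3 * lam * (1 - T) + 1) *
              (lam ^ 2 + 3 * lam + 1) := by ring
        _ ≤ (α2 + 2 * β * T) * (s ^ 2 + 3 * s + 1) * (lam ^ 2 + 3 * lam + 1) :=
            mul_le_mul_of_nonneg_right (mul_le_mul_of_nonneg_left hmono hA2) hP.le
        _ = (α2 + 2 * β * T) * (s + (1 + s) ^ 2) * (lam ^ 2 + 3 * lam + 1) := by ring
    exact le_of_mul_le_mul_right chain hP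

lemma key_ineq (α β lam : ℝ) (hα : 0 < α) (hβ : 0 < β) (hlam : 0 < lam)
    (hcond : β * (1 + lam) / (lam + (1 + lam) ^ 2) ≤ α ^ 2) (x : ℝ) (hx : 0 ≤ x) :
    β * (1 + lam * Real.exp (-α * x - β / 2 * x ^ 2)) ≤
      (α + β * x) ^ 2 * (lam * Real.exp (-α * x - β / 2 * x ^ 2)
        + (1 + lam * Real.exp (-α * x - β / 2 * x ^ 2)) ^ 2) := by
  have hT0 : 0 ≤ α * x + β / 2 * x ^ 2 := by positivity
  have hTe : -α * x - β / 2 * x ^ 2 = -(α * x + β / 2 * x ^ 2) := by ring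
  rw [hTe]
  have hsq : (α + β * x) ^ 2 = α ^ 2 + 2 * β * (α * x + β / 2 * x ^ 2) := by ring
  rw [hsq]
  have hE0 : 0 < Real.exp (-(α * x + β / 2 * x ^ 2)) := Real.exp_pos _
  have hE1 : Real.exp (-(α * x + β / 2 * x ^ 2)) ≤ 1 := Real.exp_le_one_iff.mpr (by linarith)
  have hEgeT : 1 - (α * x + β / 2 * x ^ 2) ≤ Real.exp (-(α * x + β / 2 * x ^ 2)) := by
    have := Real.add_one_le_exp (-(α * x + β / 2 * x ^ 2)); linarith
  have hcond' : β * (1 + lam) ≤ α ^ 2 * (lam ^ 2 + 3 * lam + 1) := by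
    have h0 : (0:ℝ) < lam + (1 + lam) ^ 2 := by positivity
    rw [div_le_iff₀ h0] at hcond
    nlinarith [hcond]
  exact core_ineq β lam (α ^ 2) (α * x + β / 2 * x ^ 2)
    (lam * Real.exp (-(α * x + β / 2 * x ^ 2))) hβ hlam (by positivity) hT0
    (by positivity) (by nlinarith) (mul_le_mul_of_nonneg_left hEgeT hlam.le) hcond'
/-- Theorem 1(ii): if `α² ≥ β(1+λ)/(λ + (1+λ)²)` then the CLFRD density is monotonically
decreasing on `[0, ∞)`. -/
theorem clfrd_density_decreasing (α β lam : ℝ) (hα : 0 < α) (hβ : 0 < β) (hlam : 0 < lam)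
    (g : ℝ → ℝ)
    (hg : ∀ x, g x = (α + β * x) * (1 + lam * Real.exp (-α * x - β / 2 * x ^ 2)) *
      Real.exp (-α * x - β / 2 * x ^ 2 - lam + lam * Real.exp (-α * x - β / 2 * x ^ 2)))
    (hcond : β * (1 + lam) / (lam + (1 + lam) ^ 2) ≤ α ^ 2) :
    AntitoneOn g (Ici (0 : ℝ)) := by
  have hgF : g = fun y => (α + β * y) * (1 + lam * Real.exp (-α * y - β / 2 * y ^ 2)) *
      Real.exp (-α * y - β / 2 * y ^ 2 - lam + lam * Real.exp (-α * y - β / 2 * y ^ 2)) :=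
    funext hg
  rw [hgF]
  have hDer : ∀ x : ℝ, HasDerivAt (fun y => (α + β * y) *
        (1 + lam * Real.exp (-α * y - β / 2 * y ^ 2)) *
        Real.exp (-α * y - β / 2 * y ^ 2 - lam + lam * Real.exp (-α * y - β / 2 * y ^ 2)))
      (Real.exp (-α * x - β / 2 * x ^ 2 - lam + lam * Real.exp (-α * x - β / 2 * x ^ 2)) *
        (β * (1 + lam * Real.exp (-α * x - β / 2 * x ^ 2)) -
          (α + β * x) ^ 2 * (lam * Real.exp (-α * x - β / 2 * x ^ 2)
            + (1 + lam * Real.exp (-α * x - β / 2 * x ^ 2)) ^ 2))) x := by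
    intro x
    have hu : HasDerivAt (fun y : ℝ => -α * y - β / 2 * y ^ 2) (-α - β * x) x := by
      have h1 : HasDerivAt (fun y : ℝ => -α * y) (-α) x := by
        simpa using (hasDerivAt_id x).const_mul (-α)
      have h2 : HasDerivAt (fun y : ℝ => β / 2 * y ^ 2) (β * x) x := by
        have := (hasDerivAt_pow 2 x).const_mul (β / 2)
        refine this.congr_deriv ?_
        ring
      exact h1.sub h2
    have hE := hu.exp
    have hA : HasDerivAt (fun y : ℝ => α + β * y) β x := by
      simpa using ((hasDerivAt_id x).const_mul β).const_add α
    have hB : HasDerivAt (fun y : ℝ => 1 + lam * Real.exp (-α * y - β / 2 * y ^ 2))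
        (lam * (Real.exp (-α * x - β / 2 * x ^ 2) * (-α - β * x))) x :=
      (hE.const_mul lam).const_add 1
    have hw : HasDerivAt (fun y : ℝ => -α * y - β / 2 * y ^ 2 - lam
          + lam * Real.exp (-α * y - β / 2 * y ^ 2))
        ((-α - β * x) + lam * (Real.exp (-α * x - β / 2 * x ^ 2) * (-α - β * x))) x :=
      (hu.sub_const lam).add (hE.const_mul lam)
    have hG := hw.exp
    have h := (hA.mul hB).mul hG
    refine h.congr_deriv ?_
    simp only [Pi.mul_apply]
    ring
  apply antitoneOn_of_hasDerivWithinAt_nonpos (convex_Ici 0)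
    (fun x _ => ((hDer x).continuousAt.continuousWithinAt))
    (fun x _ => (hDer x).hasDerivWithinAt)
  intro x hx
  rw [interior_Ici] at hx
  have hkey := key_ineq α β lam hα hβ hlam hcond x (le_of_lt hx)
  exact mul_nonpos_of_nonneg_of_nonpos (Real.exp_pos _).le (by linarith)
end

section
/- Fix α, β, λ > 0 and suppose α² < 3β and 0 < log(2λ) ≤ (3β - α²)/(2β). Then the CLFRD hazard rate h(x) = (α + βx)·(1 + λ·exp(-αx - (β/2)x²)) is monotonically increasing on [0, ∞). (Theorem 2(i)(a).) -/
open Set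

/-- Theorem 2(i)(a): if `α² < 3β` and `0 < log(2λ) ≤ (3β - α²)/(2β)` then the CLFRD
hazard rate is monotonically increasing on `[0, ∞)`. -/
theorem clfrd_hazard_increasing_a (α β lam : ℝ) (hα : 0 < α) (hβ : 0 < β) (hlam : 0 < lam)
    (h : ℝ → ℝ)
    (hh : ∀ x, h x = (α + β * x) * (1 + lam * Real.exp (-α * x - β / 2 * x ^ 2)))
    (hc1 : α ^ 2 < 3 * β)
    (hc2 : 0 < Real.log (2 * lam))
    (hc3 : Real.log (2 * lam) ≤ (3 * β - α ^ 2) / (2 * β)) :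
    MonotoneOn h (Ici (0 : ℝ)) := by
  have hfun : h = fun x => (α + β * x) * (1 + lam * Real.exp (-α * x - β / 2 * x ^ 2)) :=
    funext hh
  subst hfun
  -- derivative
  have hder : ∀ x : ℝ, HasDerivAt (fun x => (α + β * x) * (1 + lam * Real.exp (-α * x - β / 2 * x ^ 2)))
      (β * (1 + lam * Real.exp (-α * x - β / 2 * x ^ 2))
        + (α + β * x) * (lam * (Real.exp (-α * x - β / 2 * x ^ 2) * (-α - β * x)))) x := by
    intro x
    have hg : HasDerivAt (fun x : ℝ => -α * x - β / 2 * x ^ 2) (-α - β * x) x := by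
      have h1 : HasDerivAt (fun x : ℝ => -α * x) (-α) x := by
        simpa using (hasDerivAt_id x).const_mul (-α)
      have h2 : HasDerivAt (fun x : ℝ => β / 2 * x ^ 2) (β * x) x := by
        have := (hasDerivAt_pow 2 x).const_mul (β / 2)
        exact this.congr_deriv (by push_cast; ring)
      exact h1.sub h2
    have hE := hg.exp
    have hu : HasDerivAt (fun x : ℝ => α + β * x) β x := by
      simpa using ((hasDerivAt_id x).const_mul β).const_add α
    have := hu.mul (((hE.const_mul lam)).const_add 1)
    exact this
  -- key nonnegativity of the derivative
  have key : ∀ x : ℝ, 0 ≤ x →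
      0 ≤ β * (1 + lam * Real.exp (-α * x - β / 2 * x ^ 2))
        + (α + β * x) * (lam * (Real.exp (-α * x - β / 2 * x ^ 2) * (-α - β * x))) := by
    intro x hx
    set u : ℝ := α + β * x with hu
    have hexp_eq : -α * x - β / 2 * x ^ 2 = (α ^ 2 - u ^ 2) / (2 * β) := by
      rw [hu]; field_simp; ring
    rw [hexp_eq]
    set E : ℝ := Real.exp ((α ^ 2 - u ^ 2) / (2 * β)) with hE
    have hEpos : 0 < E := Real.exp_pos _
    have hs : u ^ 2 - β ≤ 2 * β * Real.exp ((u ^ 2 - 3 * β) / (2 * β)) := by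
      have := Real.add_one_le_exp ((u ^ 2 - 3 * β) / (2 * β))
      have h2b : (0:ℝ) < 2 * β := by linarith
      calc u ^ 2 - β = 2 * β * ((u ^ 2 - 3 * β) / (2 * β) + 1) := by
            field_simp; ring
        _ ≤ 2 * β * Real.exp ((u ^ 2 - 3 * β) / (2 * β)) := by
            apply mul_le_mul_of_nonneg_left this (le_of_lt h2b)
    have hEmul : E * Real.exp ((u ^ 2 - 3 * β) / (2 * β)) = Real.exp ((α ^ 2 - 3 * β) / (2 * β)) := by
      rw [hE, ← Real.exp_add]
      congr 1
      field_simp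
      ring
    have h2lam : 2 * lam ≤ Real.exp ((3 * β - α ^ 2) / (2 * β)) := by
      rw [← Real.log_le_iff_le_exp (by linarith)] 
      exact hc3
    have hneg : Real.exp ((α ^ 2 - 3 * β) / (2 * β)) = (Real.exp ((3 * β - α ^ 2) / (2 * β)))⁻¹ := by
      rw [← Real.exp_neg]; congr 1; ring
    have hkey : lam * E * (u ^ 2 - β) ≤ β := by
      have step1 : lam * E * (u ^ 2 - β) ≤ lam * E * (2 * β * Real.exp ((u ^ 2 - 3 * β) / (2 * β))) :=
        mul_le_mul_of_nonneg_left hs (by positivity)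
      have step2 : lam * E * (2 * β * Real.exp ((u ^ 2 - 3 * β) / (2 * β)))
          = 2 * lam * β * Real.exp ((α ^ 2 - 3 * β) / (2 * β)) := by
        rw [← hEmul]; ring
      have hepos : 0 < Real.exp ((3 * β - α ^ 2) / (2 * β)) := Real.exp_pos _
      have step3 : 2 * lam * β * Real.exp ((α ^ 2 - 3 * β) / (2 * β)) ≤ β := by
        rw [hneg]
        rw [mul_inv_le_iff₀ hepos]
        nlinarith
      calc lam * E * (u ^ 2 - β) ≤ _ := step1
        _ = _ := step2
        _ ≤ β := step3
    have hux : -α - β * x = -u := by rw [hu]; ring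
    rw [hux]
    nlinarith [hkey]
  -- conclude
  apply monotoneOn_of_deriv_nonneg (convex_Ici 0)
  · exact Continuous.continuousOn (by continuity)
  · intro x hx
    exact (hder x).differentiableAt.differentiableWithinAt
  · intro x hx
    rw [(hder x).deriv]
    exact key x (le_of_lt (by simpa [interior_Ici] using hx))
end

section
/- Fix α, β, λ > 0 and suppose α² ≥ 3β and β(1+λ) ≥ λα². Then the CLFRD hazard rate h(x) = (α + βx)·(1 + λ·exp(-αx - (β/2)x²)) is monotonically increasing on [0, ∞). (Theorem 2(i)(b).) -/
open Set

/-- Theorem 2(i)(b): if `α² ≥ 3β` and `β(1+λ) ≥ λα²` then the CLFRD hazard rate is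
monotonically increasing on `[0, ∞)`. -/
theorem clfrd_hazard_increasing_b (α β lam : ℝ) (hα : 0 < α) (hβ : 0 < β) (hlam : 0 < lam)
    (h : ℝ → ℝ)
    (hh : ∀ x, h x = (α + β * x) * (1 + lam * Real.exp (-α * x - β / 2 * x ^ 2)))
    (hc1 : 3 * β ≤ α ^ 2)
    (hc2 : lam * α ^ 2 ≤ β * (1 + lam)) :
    MonotoneOn h (Ici (0 : ℝ)) := by
  have hfun : h = fun x => (α + β * x) * (1 + lam * Real.exp (-α * x - β / 2 * x ^ 2)) :=
    funext hh
  have key : ∀ x : ℝ, HasDerivAt h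
      (β * (1 + lam * Real.exp (-α * x - β / 2 * x ^ 2)) +
        (α + β * x) * (lam * (Real.exp (-α * x - β / 2 * x ^ 2) * (-α - β * x)))) x := by
    intro x
    rw [hfun]
    have hg : HasDerivAt (fun x : ℝ => -α * x - β / 2 * x ^ 2) (-α - β * x) x := by
      have h1 : HasDerivAt (fun x : ℝ => -α * x) (-α) x := by
        simpa using (hasDerivAt_id x).const_mul (-α)
      have h2 : HasDerivAt (fun x : ℝ => β / 2 * x ^ 2) (β / 2 * (2 * x)) x := by
        simpa using ((hasDerivAt_pow 2 x).const_mul (β / 2))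
      have : HasDerivAt (fun x : ℝ => -α * x - β / 2 * x ^ 2) (-α - β / 2 * (2 * x)) x :=
        h1.sub h2
      convert this using 1
      ring
    have he : HasDerivAt (fun x : ℝ => Real.exp (-α * x - β / 2 * x ^ 2))
        (Real.exp (-α * x - β / 2 * x ^ 2) * (-α - β * x)) x := hg.exp
    have hl : HasDerivAt (fun x : ℝ => 1 + lam * Real.exp (-α * x - β / 2 * x ^ 2))
        (lam * (Real.exp (-α * x - β / 2 * x ^ 2) * (-α - β * x))) x :=
      (he.const_mul lam).const_add 1
    have ha : HasDerivAt (fun x : ℝ => α + β * x) β x := by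
      simpa using ((hasDerivAt_id x).const_mul β).const_add α
    exact ha.mul hl
  have hdiff : ∀ x : ℝ, DifferentiableAt ℝ h x := fun x => (key x).differentiableAt
  apply monotoneOn_of_deriv_nonneg (convex_Ici 0)
  · exact (Differentiable.continuous fun x => hdiff x).continuousOn
  · exact fun x _ => (hdiff x).differentiableWithinAt
  · intro x hx
    rw [interior_Ici] at hx
    have hx0 : (0 : ℝ) ≤ x := le_of_lt hx
    rw [(key x).deriv]
    set u : ℝ := α * x + β / 2 * x ^ 2 with hu
    have hu0 : 0 ≤ u := by positivity
    have harg : -α * x - β / 2 * x ^ 2 = -u := by ring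
    rw [harg]
    set e : ℝ := Real.exp (-u) with he
    have hepos : 0 < e := Real.exp_pos _
    have hkey : e * (1 + u) ≤ 1 := by
      have h1 : u + 1 ≤ Real.exp u := Real.add_one_le_exp u
      have h2 : e * Real.exp u = 1 := by
        rw [he, ← Real.exp_add]; simp
      nlinarith [mul_le_mul_of_nonneg_left h1 hepos.le]
    have hlam2 : 2 * lam ≤ 1 := by nlinarith
    have hab : lam * (α ^ 2 - β) ≤ β := by nlinarith
    have hfinal : β * (1 + lam * e) + (α + β * x) * (lam * (e * (-α - β * x)))
        = β * (1 + lam * e) - lam * e * (α ^ 2 + 2 * β * u) := by rw [hu]; ring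
    rw [hfinal]
    nlinarith [mul_le_mul_of_nonneg_right hab hepos.le,
      mul_le_mul_of_nonneg_right hkey hβ.le,
      mul_le_mul_of_nonneg_right hlam2 (mul_nonneg (mul_nonneg hβ.le hepos.le) hu0)]
end

section
/- Fix α, β, λ > 0 and suppose α² < 3β, β(1+λ) ≤ λα², and log(2λ) > (3β - α²)/(2β). Then the CLFRD hazard rate h(x) = (α + βx)·(1 + λ·exp(-αx - (β/2)x²)) is bathtub-shaped on [0, ∞): there exists x₀ > 0 such that h is monotonically decreasing on [0, x₀] and monotonically increasing on [x₀, ∞). (Theorem 2(ii)(a).) -/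
open Set

set_option maxHeartbeats 1000000 in
/-- Theorem 2(ii)(a): if `α² < 3β`, `β(1+λ) ≤ λα²` and `log(2λ) > (3β - α²)/(2β)`, then
the CLFRD hazard rate is bathtub-shaped: decreasing on `[0, x₀]` and increasing on
`[x₀, ∞)` for some `x₀ > 0`. -/
theorem clfrd_hazard_bathtub_a (α β lam : ℝ) (hα : 0 < α) (hβ : 0 < β) (hlam : 0 < lam)
    (h : ℝ → ℝ)
    (hh : ∀ x, h x = (α + β * x) * (1 + lam * Real.exp (-α * x - β / 2 * x ^ 2)))
    (hc1 : α ^ 2 < 3 * β)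
    (hc2 : β * (1 + lam) ≤ lam * α ^ 2)
    (hc3 : (3 * β - α ^ 2) / (2 * β) < Real.log (2 * lam)) :
    ∃ x₀ : ℝ, 0 < x₀ ∧ AntitoneOn h (Icc 0 x₀) ∧ MonotoneOn h (Ici x₀) := by
  have hfun : h = fun x => (α + β * x) * (1 + lam * Real.exp (-α * x - β / 2 * x ^ 2)) :=
    funext hh
  set E : ℝ → ℝ := fun x => Real.exp (-α * x - β / 2 * x ^ 2) with hE
  set ψ : ℝ → ℝ := fun x => lam * E x * ((α + β * x) ^ 2 - β) with hψ
  have hEpos : ∀ x, 0 < E x := fun x => Real.exp_pos _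
  -- derivative of exponent
  have hgd : ∀ x : ℝ, HasDerivAt (fun x : ℝ => -α * x - β / 2 * x ^ 2) (-α - β * x) x := by
    intro x
    have h1 : HasDerivAt (fun x : ℝ => -α * x) (-α) x := by
      simpa using (hasDerivAt_id x).const_mul (-α)
    have h2 : HasDerivAt (fun x : ℝ => β / 2 * x ^ 2) (β / 2 * (2 * x ^ 1 * 1)) x :=
      ((hasDerivAt_id x).pow 2).const_mul (β / 2)
    have h3 : HasDerivAt (fun x => -α * x - β / 2 * x ^ 2) _ x := h1.sub h2
    convert h3 using 1
    ring
  have hEd : ∀ x : ℝ, HasDerivAt E ((-α - β * x) * E x) x := by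
    intro x
    simpa [hE, mul_comm] using (hgd x).exp
  have hlin : ∀ x : ℝ, HasDerivAt (fun x : ℝ => α + β * x) β x := by
    intro x
    simpa using ((hasDerivAt_id x).const_mul β).const_add α
  have hhd : ∀ x : ℝ, HasDerivAt h (β - ψ x) x := by
    intro x
    rw [hfun]
    have h2 : HasDerivAt (fun x => 1 + lam * E x) (lam * ((-α - β * x) * E x)) x :=
      ((hEd x).const_mul lam).const_add 1
    have h3 : HasDerivAt (fun x => (α + β * x) * (1 + lam * E x)) _ x := (hlin x).mul h2
    convert h3 using 1
    simp only [hψ]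
    ring
  have hψd : ∀ x : ℝ, HasDerivAt ψ
      (lam * E x * ((α + β * x) * (3 * β - (α + β * x) ^ 2))) x := by
    intro x
    have h1 : HasDerivAt (fun x => lam * E x) (lam * ((-α - β * x) * E x)) x :=
      (hEd x).const_mul lam
    have h2 : HasDerivAt (fun x : ℝ => (α + β * x) ^ 2 - β) (2 * (α + β * x) ^ 1 * β) x :=
      ((hlin x).pow 2).sub_const β
    have h3 : HasDerivAt (fun x => lam * E x * ((α + β * x) ^ 2 - β)) _ x := h1.mul h2
    convert h3 using 1
    ring
  have hψc : Continuous ψ := by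
    rw [continuous_iff_continuousAt]
    exact fun x => (hψd x).continuousAt
  have hhc : Continuous h := by
    rw [continuous_iff_continuousAt]
    exact fun x => (hhd x).continuousAt
  set s := Real.sqrt (3 * β) with hs
  have hs2 : s ^ 2 = 3 * β := Real.sq_sqrt (by positivity)
  have hsnn : 0 ≤ s := Real.sqrt_nonneg _
  have hαs : α < s := (Real.lt_sqrt hα.le).mpr hc1
  set xs := (s - α) / β with hxs
  have hxs_pos : 0 < xs := div_pos (by linarith) hβ
  have hxs_eq : α + β * xs = s := by
    rw [hxs]; field_simp; ring
  -- ψ monotone on [0, xs]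
  have hψmono : MonotoneOn ψ (Icc 0 xs) := by
    apply monotoneOn_of_deriv_nonneg (convex_Icc _ _) hψc.continuousOn
      (fun x _ => (hψd x).differentiableAt.differentiableWithinAt)
    intro x hx
    rw [interior_Icc] at hx
    rw [(hψd x).deriv]
    have h1 : 0 < α + β * x := by nlinarith [hx.1]
    have h2 : (α + β * x) ^ 2 ≤ 3 * β := by
      have hle : α + β * x ≤ s := by
        rw [← hxs_eq]; nlinarith [hx.2]
      nlinarith
    have := (hEpos x).le
    apply mul_nonneg (by positivity)
    exact mul_nonneg h1.le (by linarith)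
  -- ψ antitone on [xs, ∞)
  have hψanti : AntitoneOn ψ (Ici xs) := by
    apply antitoneOn_of_deriv_nonpos (convex_Ici _) hψc.continuousOn
      (fun x _ => (hψd x).differentiableAt.differentiableWithinAt)
    intro x hx
    rw [interior_Ici] at hx
    rw [(hψd x).deriv]
    have hxpos : 0 < x := lt_trans hxs_pos hx
    have h1 : 0 < α + β * x := by nlinarith
    have h2 : 3 * β ≤ (α + β * x) ^ 2 := by
      have hle : s ≤ α + β * x := by
        rw [← hxs_eq]; nlinarith [le_of_lt (mem_Ioi.mp hx)]
      nlinarith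
    have hprod : (α + β * x) * (3 * β - (α + β * x) ^ 2) ≤ 0 :=
      mul_nonpos_of_nonneg_of_nonpos h1.le (by linarith)
    have hE' := (hEpos x).le
    exact mul_nonpos_of_nonneg_of_nonpos (by positivity) hprod
  -- ψ 0 ≥ β
  have hψ0 : β ≤ ψ 0 := by
    have he : ψ 0 = lam * (α ^ 2 - β) := by
      simp [hψ, hE]
    rw [he]
    nlinarith
  -- ψ xs > β
  have hkey : -α * xs - β / 2 * xs ^ 2 = -((3 * β - α ^ 2) / (2 * β)) := by
    have h1 : β * xs = s - α := by linarith [hxs_eq]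
    field_simp
    nlinarith [h1, hs2]
  have hψxs_eq : ψ xs = 2 * β * lam * Real.exp (-((3 * β - α ^ 2) / (2 * β))) := by
    simp only [hψ, hE]
    rw [hkey]
    have h2 : (α + β * xs) ^ 2 - β = 2 * β := by
      rw [hxs_eq]; linarith
    rw [h2]; ring
  have hexp : Real.exp ((3 * β - α ^ 2) / (2 * β)) < 2 * lam :=
    (Real.lt_log_iff_exp_lt (by positivity)).mp hc3
  have hψxs : β < ψ xs := by
    rw [hψxs_eq, Real.exp_neg]
    rw [show 2 * β * lam * (Real.exp ((3 * β - α ^ 2) / (2 * β)))⁻¹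
        = (2 * β * lam) / Real.exp ((3 * β - α ^ 2) / (2 * β)) by ring]
    rw [lt_div_iff₀ (Real.exp_pos _)]
    nlinarith [Real.exp_pos ((3 * β - α ^ 2) / (2 * β))]
  -- ψ tends to 0 at infinity
  have hu : Filter.Tendsto (fun x : ℝ => α * x + β / 2 * x ^ 2) Filter.atTop Filter.atTop := by
    apply Filter.tendsto_atTop_mono (f := fun x : ℝ => α * x)
    · intro x; nlinarith [sq_nonneg x]
    · exact Filter.Tendsto.const_mul_atTop hα Filter.tendsto_id
  have hF : Filter.Tendsto
      (fun t : ℝ => lam * (α ^ 2 - β) * Real.exp (-t) + 2 * lam * β * (t ^ 1 * Real.exp (-t)))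
      Filter.atTop (nhds 0) := by
    have h1 := Real.tendsto_exp_neg_atTop_nhds_zero.const_mul (lam * (α ^ 2 - β))
    have h2 := (Real.tendsto_pow_mul_exp_neg_atTop_nhds_zero 1).const_mul (2 * lam * β)
    simpa using h1.add h2
  have hψtend : Filter.Tendsto ψ Filter.atTop (nhds 0) := by
    have hcongr : ∀ x : ℝ, (fun t : ℝ => lam * (α ^ 2 - β) * Real.exp (-t)
        + 2 * lam * β * (t ^ 1 * Real.exp (-t))) ((fun x : ℝ => α * x + β / 2 * x ^ 2) x)
        = ψ x := by
      intro x
      simp only [hψ, hE, pow_one]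
      rw [show -α * x - β / 2 * x ^ 2 = -(α * x + β / 2 * x ^ 2) by ring]
      ring
    exact Filter.Tendsto.congr hcongr (hF.comp hu)
  obtain ⟨R, hR1, hR2⟩ :=
    ((hψtend.eventually_lt_const hβ).and (Filter.eventually_ge_atTop xs)).exists
  -- IVT
  obtain ⟨x₀, hx₀mem, hx₀⟩ :=
    intermediate_value_Icc' hR2 hψc.continuousOn ⟨hR1.le, hψxs.le⟩
  have hx₀pos : 0 < x₀ := lt_of_lt_of_le hxs_pos hx₀mem.1
  refine ⟨x₀, hx₀pos, ?_, ?_⟩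
  · apply antitoneOn_of_deriv_nonpos (convex_Icc _ _) hhc.continuousOn
      (fun x _ => (hhd x).differentiableAt.differentiableWithinAt)
    intro x hx
    rw [interior_Icc] at hx
    rw [(hhd x).deriv]
    have hψx : β ≤ ψ x := by
      rcases le_total x xs with hc | hc
      · have h1 : ψ 0 ≤ ψ x :=
          hψmono ⟨le_refl 0, hxs_pos.le⟩ ⟨hx.1.le, hc⟩ hx.1.le
        linarith
      · have h1 : ψ x₀ ≤ ψ x := hψanti hc hx₀mem.1 hx.2.le
        rw [hx₀] at h1
        linarith
    linarith
  · apply monotoneOn_of_deriv_nonneg (convex_Ici _) hhc.continuousOn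
      (fun x _ => (hhd x).differentiableAt.differentiableWithinAt)
    intro x hx
    rw [interior_Ici] at hx
    rw [(hhd x).deriv]
    have h1 : ψ x ≤ ψ x₀ := hψanti hx₀mem.1 (le_trans hx₀mem.1 hx.le) hx.le
    rw [hx₀] at h1
    linarith
end

section
/- Fix α, β, λ > 0 and suppose α² ≥ 3β and β(1+λ) ≤ λα². Then the CLFRD hazard rate h(x) = (α + βx)·(1 + λ·exp(-αx - (β/2)x²)) is bathtub-shaped on [0, ∞): there exists x₀ ≥ 0 such that h is monotonically decreasing on [0, x₀] and monotonically increasing on [x₀, ∞). (Theorem 2(ii)(b).) -/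
open Set Filter

/-- Theorem 2(ii)(b): if `α² ≥ 3β` and `β(1+λ) ≤ λα²`, then the CLFRD hazard rate is
bathtub-shaped: decreasing on `[0, x₀]` and increasing on `[x₀, ∞)` for some `x₀ ≥ 0`. -/
theorem clfrd_hazard_bathtub_b (α β lam : ℝ) (hα : 0 < α) (hβ : 0 < β) (hlam : 0 < lam)
    (h : ℝ → ℝ)
    (hh : ∀ x, h x = (α + β * x) * (1 + lam * Real.exp (-α * x - β / 2 * x ^ 2)))
    (hc1 : 3 * β ≤ α ^ 2)
    (hc2 : β * (1 + lam) ≤ lam * α ^ 2) :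
    ∃ x₀ : ℝ, 0 ≤ x₀ ∧ AntitoneOn h (Icc 0 x₀) ∧ MonotoneOn h (Ici x₀) := by
  have hhfun : h = fun x => (α + β * x) * (1 + lam * Real.exp (-α * x - β / 2 * x ^ 2)) :=
    funext hh
  set E : ℝ → ℝ := fun x => Real.exp (-α * x - β / 2 * x ^ 2) with hE
  set g : ℝ → ℝ := fun x => β + lam * E x * (β - (α + β * x) ^ 2) with hg
  have hEpos : ∀ x, 0 < E x := fun x => Real.exp_pos _
  -- derivative of E
  have hdE : ∀ x : ℝ, HasDerivAt E (E x * (-α - β * x)) x := by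
    intro x
    have hu : HasDerivAt (fun x : ℝ => -α * x - β / 2 * x ^ 2) (-α - β * x) x := by
      have h1 : HasDerivAt (fun x : ℝ => -α * x) (-α) x := by
        simpa using (hasDerivAt_id x).const_mul (-α)
      have h2 : HasDerivAt (fun x : ℝ => β / 2 * x ^ 2) (β / 2 * (2 * x)) x := by
        simpa using ((hasDerivAt_pow 2 x).const_mul (β / 2))
      have h3 := h1.sub h2
      refine h3.congr_deriv ?_
      ring
    simpa [hE, mul_comm] using hu.exp
  -- derivative of h
  have hdh : ∀ x : ℝ, HasDerivAt h (g x) x := by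
    intro x
    have h1 : HasDerivAt (fun x : ℝ => α + β * x) β x := by
      simpa using ((hasDerivAt_id x).const_mul β).const_add α
    have h2 : HasDerivAt (fun x : ℝ => 1 + lam * E x) (lam * (E x * (-α - β * x))) x :=
      ((hdE x).const_mul lam).const_add 1
    have h3 := h1.mul h2
    rw [hhfun]
    refine h3.congr_deriv ?_
    simp only [hg, hE]
    ring
  have hdiffh : ∀ x : ℝ, DifferentiableAt ℝ h x := fun x => (hdh x).differentiableAt
  have hconth : Continuous h := Differentiable.continuous (fun x => hdiffh x)
  -- derivative of g
  have hdg : ∀ x : ℝ,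
      HasDerivAt g (lam * E x * ((α + β * x) * ((α + β * x) ^ 2 - 3 * β))) x := by
    intro x
    have ht : HasDerivAt (fun x : ℝ => α + β * x) β x := by
      simpa using ((hasDerivAt_id x).const_mul β).const_add α
    have h1 : HasDerivAt (fun x : ℝ => β - (α + β * x) ^ 2)
        (-(2 * (α + β * x) * β)) x := by
      have h1' := (ht.pow 2).const_sub β
      refine h1'.congr_deriv ?_
      ring
    have h2 := (((hdE x).mul h1).const_mul lam).const_add β
    have hgeq : g = fun x => β + lam * (E x * (β - (α + β * x) ^ 2)) := by
      funext y; simp only [hg]; ring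
    rw [hgeq]
    refine h2.congr_deriv ?_
    ring
  have hdiffg : ∀ x : ℝ, DifferentiableAt ℝ g x := fun x => (hdg x).differentiableAt
  have hcontg : Continuous g := Differentiable.continuous (fun x => hdiffg x)
  -- g is monotone on [0, ∞)
  have gmono : MonotoneOn g (Ici 0) := by
    apply monotoneOn_of_deriv_nonneg (convex_Ici 0) hcontg.continuousOn
      (fun x _ => (hdiffg x).differentiableWithinAt)
    intro x hx
    rw [interior_Ici] at hx
    rw [(hdg x).deriv]
    have hx0 : (0 : ℝ) < x := hx
    have ht0 : 0 < α + β * x := by nlinarith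
    have ht2 : 3 * β ≤ (α + β * x) ^ 2 := by
      nlinarith [mul_pos (mul_pos hα hβ) hx0, sq_nonneg (β * x)]
    have hEx := hEpos x
    have : 0 ≤ (α + β * x) ^ 2 - 3 * β := by linarith
    positivity
  -- g 0 ≤ 0
  have g0 : g 0 ≤ 0 := by
    have : E 0 = 1 := by simp [hE]
    simp only [hg, this]
    nlinarith
  -- there is X ≥ 0 with g X > 0
  obtain ⟨X, hX0, hgX⟩ : ∃ X, 0 ≤ X ∧ 0 < g X := by
    have htend : Tendsto (fun x : ℝ => lam * (α + β) ^ 2 *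
        ((α * x) ^ 2 * Real.exp (-(α * x)) / α ^ 2)) atTop (nhds 0) := by
      have h1 : Tendsto (fun y : ℝ => y ^ 2 * Real.exp (-y)) atTop (nhds 0) :=
        Real.tendsto_pow_mul_exp_neg_atTop_nhds_zero 2
      have h2 : Tendsto (fun x : ℝ => α * x) atTop atTop :=
        tendsto_atTop_atTop_of_monotone' (fun a b hab => by nlinarith)
          (by
            rintro ⟨C, hC⟩
            have := hC (mem_range_self ((C + 1) / α))
            rw [mul_div_cancel₀ _ (ne_of_gt hα)] at this
            linarith)
      have h3 := h1.comp h2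
      have h4 := (h3.div_const (α ^ 2)).const_mul (lam * (α + β) ^ 2)
      simpa using h4
    have hev : ∀ᶠ x in atTop, lam * (α + β) ^ 2 *
        ((α * x) ^ 2 * Real.exp (-(α * x)) / α ^ 2) < β :=
      htend.eventually_lt_const hβ
    obtain ⟨X, hX⟩ := (hev.and (eventually_ge_atTop (1 : ℝ))).exists
    refine ⟨X, by linarith [hX.2], ?_⟩
    have hX1 : (1 : ℝ) ≤ X := hX.2
    have hXpos : (0 : ℝ) < X := by linarith
    have hEle : E X ≤ Real.exp (-(α * X)) := by
      rw [hE]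
      apply Real.exp_le_exp.2
      nlinarith
    have hEXpos := hEpos X
    have hexppos : (0 : ℝ) < Real.exp (-(α * X)) := Real.exp_pos _
    have hbound : lam * E X * (α + β * X) ^ 2 ≤
        lam * (α + β) ^ 2 * ((α * X) ^ 2 * Real.exp (-(α * X)) / α ^ 2) := by
      have hsq : (α + β * X) ^ 2 ≤ ((α + β) * X) ^ 2 := by
        nlinarith [mul_nonneg (mul_nonneg hα.le (sub_nonneg.2 hX1))
          (by positivity : (0:ℝ) ≤ α * X + α + 2 * β * X)]
      have key : lam * E X * (α + β * X) ^ 2 ≤ lam * Real.exp (-(α * X)) * ((α + β) * X) ^ 2 := by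
        have h5 : lam * E X * (α + β * X) ^ 2 ≤ lam * Real.exp (-(α * X)) * (α + β * X) ^ 2 :=
          mul_le_mul_of_nonneg_right (mul_le_mul_of_nonneg_left hEle hlam.le)
            (sq_nonneg (α + β * X))
        have h6 : lam * Real.exp (-(α * X)) * (α + β * X) ^ 2 ≤
            lam * Real.exp (-(α * X)) * ((α + β) * X) ^ 2 :=
          mul_le_mul_of_nonneg_left hsq (by positivity)
        linarith
      calc lam * E X * (α + β * X) ^ 2 ≤ lam * Real.exp (-(α * X)) * ((α + β) * X) ^ 2 := key
        _ = lam * (α + β) ^ 2 * ((α * X) ^ 2 * Real.exp (-(α * X)) / α ^ 2) := by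
            field_simp
    have : lam * E X * (α + β * X) ^ 2 < β := lt_of_le_of_lt hbound hX.1
    simp only [hg]
    nlinarith [mul_pos (mul_pos hlam hEXpos) hβ]
  -- define x₀
  set S : Set ℝ := {x | 0 ≤ x ∧ g x ≤ 0} with hS
  have hSne : S.Nonempty := ⟨0, le_refl 0, g0⟩
  have hSbdd : BddAbove S := by
    refine ⟨X, fun s hs => ?_⟩
    by_contra hc
    push_neg at hc
    have := gmono hX0 (le_trans hX0 hc.le) hc.le
    have := hs.2
    linarith
  set x₀ := sSup S with hx₀
  have hx₀0 : 0 ≤ x₀ := le_csSup hSbdd ⟨le_refl 0, g0⟩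
  refine ⟨x₀, hx₀0, ?_, ?_⟩
  · -- antitone on [0, x₀]
    apply antitoneOn_of_deriv_nonpos (convex_Icc 0 x₀) hconth.continuousOn
      (fun x _ => (hdiffh x).differentiableWithinAt)
    intro x hx
    rw [interior_Icc] at hx
    rw [(hdh x).deriv]
    obtain ⟨s, hsS, hxs⟩ := exists_lt_of_lt_csSup hSne hx.2
    calc g x ≤ g s := gmono hx.1.le hsS.1 hxs.le
      _ ≤ 0 := hsS.2
  · -- monotone on [x₀, ∞)
    apply monotoneOn_of_deriv_nonneg (convex_Ici x₀) hconth.continuousOn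
      (fun x _ => (hdiffh x).differentiableWithinAt)
    intro x hx
    rw [interior_Ici] at hx
    rw [(hdh x).deriv]
    have hxpos : 0 ≤ x := le_trans hx₀0 hx.le
    have hxnS : x ∉ S := fun hxS => absurd (le_csSup hSbdd hxS) (not_le.2 hx)
    have : ¬ g x ≤ 0 := fun hgx => hxnS ⟨hxpos, hgx⟩
    linarith [not_le.1 this]
end

section
/- Fix α, β, λ > 0 and suppose α² < 3β, β(1+λ) > λα², and log(2λ) > (3β - α²)/(2β). Then the CLFRD hazard rate h(x) = (α + βx)·(1 + λ·exp(-αx - (β/2)x²)) has an inverse-bathtub (increasing–decreasing–increasing) shape on [0, ∞): there exist 0 < x₁ < x₂ such that h is monotonically increasing on [0, x₁], monotonically decreasing on [x₁, x₂], and monotonically increasing on [x₂, ∞). (Theorem 2(iii).) -/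
open Set

set_option maxHeartbeats 1000000

/-- Theorem 2(iii): if `α² < 3β`, `β(1+λ) > λα²` and `log(2λ) > (3β - α²)/(2β)`, then the
CLFRD hazard rate has an inverse-bathtub (increasing–decreasing–increasing) shape:
increasing on `[0, x₁]`, decreasing on `[x₁, x₂]`, increasing on `[x₂, ∞)` for some
`0 < x₁ < x₂`. -/
theorem clfrd_hazard_inverse_bathtub (α β lam : ℝ)
    (hα : 0 < α) (hβ : 0 < β) (hlam : 0 < lam)
    (h : ℝ → ℝ)
    (hh : ∀ x, h x = (α + β * x) * (1 + lam * Real.exp (-α * x - β / 2 * x ^ 2)))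
    (hc1 : α ^ 2 < 3 * β)
    (hc2 : lam * α ^ 2 < β * (1 + lam))
    (hc3 : (3 * β - α ^ 2) / (2 * β) < Real.log (2 * lam)) :
    ∃ x₁ x₂ : ℝ, 0 < x₁ ∧ x₁ < x₂ ∧
      MonotoneOn h (Icc 0 x₁) ∧ AntitoneOn h (Icc x₁ x₂) ∧ MonotoneOn h (Ici x₂) := by
  have hfun : h = fun x => (α + β * x) * (1 + lam * Real.exp (-α * x - β / 2 * x ^ 2)) :=
    funext hh
  set g : ℝ → ℝ := fun x => β * Real.exp (α * x + β / 2 * x ^ 2)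
      + lam * (β - (α + β * x) ^ 2) with hg_def
  -- basic positivity facts
  have hL2 : 0 < Real.log (2 * lam) :=
    lt_trans (div_pos (by linarith) (by linarith)) hc3
  have h2l : 1 < 2 * lam := by
    by_contra hco
    push_neg at hco
    have := Real.log_nonpos (by positivity) hco
    linarith
  -- derivative of u(x) = αx + βx²/2
  have hU : ∀ x : ℝ, HasDerivAt (fun x => α * x + β / 2 * x ^ 2) (α + β * x) x := by
    intro x
    have h1 : HasDerivAt (fun x : ℝ => α * x) α x := by
      simpa using (hasDerivAt_id x).const_mul α
    have h2 : HasDerivAt (fun x : ℝ => β / 2 * x ^ 2) (β * x) x := by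
      have := (hasDerivAt_pow 2 x).const_mul (β / 2)
      refine this.congr_deriv (Eq.symm ?_)
      ring
    exact h1.add h2
  -- u is strictly increasing on nonnegatives
  have humono : ∀ a b : ℝ, 0 ≤ a → a < b →
      α * a + β / 2 * a ^ 2 < α * b + β / 2 * b ^ 2 := by
    intro a b ha hab
    nlinarith [mul_pos hα (sub_pos.mpr hab),
      mul_pos hβ (mul_pos (sub_pos.mpr hab) (show (0:ℝ) < a + b by linarith))]
  have hUcont : Continuous (fun x : ℝ => α * x + β / 2 * x ^ 2) := by continuity
  -- derivative of g
  have hG : ∀ x : ℝ, HasDerivAt g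
      (β * (α + β * x) * (Real.exp (α * x + β / 2 * x ^ 2) - 2 * lam)) x := by
    intro x
    have e1 : HasDerivAt (fun x => β * Real.exp (α * x + β / 2 * x ^ 2))
        (β * (Real.exp (α * x + β / 2 * x ^ 2) * (α + β * x))) x :=
      ((hU x).exp).const_mul β
    have e2 : HasDerivAt (fun x : ℝ => α + β * x) β x := by
      simpa using ((hasDerivAt_id x).const_mul β).const_add α
    have e3 : HasDerivAt (fun x : ℝ => (α + β * x) ^ 2) (2 * (α + β * x) ^ 1 * β) x :=
      e2.pow 2
    have e4 := (e3.const_sub β).const_mul lam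
    have := e1.add e4
    rw [hg_def]
    refine this.congr_deriv (Eq.symm ?_)
    ring
  have hgcont : Continuous g := by
    rw [hg_def]; continuity
  -- derivative of h
  have hH : ∀ x : ℝ, HasDerivAt h (Real.exp (-α * x - β / 2 * x ^ 2) * g x) x := by
    intro x
    have hv : HasDerivAt (fun x : ℝ => -α * x - β / 2 * x ^ 2) (-α - β * x) x := by
      have h1 : HasDerivAt (fun x : ℝ => -α * x) (-α) x := by
        simpa using (hasDerivAt_id x).const_mul (-α)
      have h2 : HasDerivAt (fun x : ℝ => β / 2 * x ^ 2) (β * x) x := by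
        have := (hasDerivAt_pow 2 x).const_mul (β / 2)
        refine this.congr_deriv (Eq.symm ?_)
        ring
      exact h1.sub h2
    have e1 : HasDerivAt (fun x : ℝ => α + β * x) β x := by
      simpa using ((hasDerivAt_id x).const_mul β).const_add α
    have e2 : HasDerivAt (fun x : ℝ => 1 + lam * Real.exp (-α * x - β / 2 * x ^ 2))
        (lam * (Real.exp (-α * x - β / 2 * x ^ 2) * (-α - β * x))) x :=
      ((hv.exp).const_mul lam).const_add 1
    have := e1.mul e2
    rw [hfun]
    refine this.congr_deriv (Eq.symm ?_)
    have hEE : Real.exp (-α * x - β / 2 * x ^ 2) * Real.exp (α * x + β / 2 * x ^ 2) = 1 := by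
      rw [← Real.exp_add]
      norm_num
    rw [hg_def]
    linear_combination β * hEE
  have hhdiff : Differentiable ℝ h := fun x => (hH x).differentiableAt
  have hhderiv : ∀ x : ℝ, deriv h x = Real.exp (-α * x - β / 2 * x ^ 2) * g x :=
    fun x => (hH x).deriv
  -- find x₀ with u x₀ = log (2λ)
  have hLpos : 0 < Real.log (2 * lam) / α := div_pos hL2 hα
  have hImage := intermediate_value_Icc (le_of_lt hLpos) hUcont.continuousOn
  have hmemI : Real.log (2 * lam) ∈
      Icc ((fun x : ℝ => α * x + β / 2 * x ^ 2) 0)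
        ((fun x : ℝ => α * x + β / 2 * x ^ 2) (Real.log (2 * lam) / α)) := by
    constructor
    · simp
      positivity
    · simp only
      rw [mul_div_cancel₀ _ (ne_of_gt hα)]
      nlinarith [sq_nonneg (Real.log (2 * lam) / α)]
  obtain ⟨x₀, hx₀mem, hux₀'⟩ := hImage hmemI
  have hux₀ : α * x₀ + β / 2 * x₀ ^ 2 = Real.log (2 * lam) := hux₀'
  have hx₀pos : 0 < x₀ := by
    rcases lt_or_eq_of_le hx₀mem.1 with hlt | heq
    · exact hlt
    · exfalso; rw [← heq] at hux₀; simp at hux₀; linarith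
  -- g is strictly decreasing on [0, x₀], strictly increasing on [x₀, ∞)
  have hanti : StrictAntiOn g (Icc 0 x₀) := by
    apply strictAntiOn_of_deriv_neg (convex_Icc 0 x₀) hgcont.continuousOn
    intro x hx
    rw [interior_Icc] at hx
    rw [(hG x).deriv]
    have h1 : 0 < α + β * x := by nlinarith [hx.1]
    have h2 : Real.exp (α * x + β / 2 * x ^ 2) < 2 * lam := by
      have := humono x x₀ (le_of_lt hx.1) hx.2
      calc Real.exp (α * x + β / 2 * x ^ 2)
          < Real.exp (Real.log (2 * lam)) := by
            apply Real.exp_lt_exp.mpr; linarith [hux₀]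
        _ = 2 * lam := Real.exp_log (by positivity)
    exact mul_neg_of_pos_of_neg (mul_pos hβ h1) (sub_neg.mpr h2)
  have hmono : StrictMonoOn g (Ici x₀) := by
    apply strictMonoOn_of_deriv_pos (convex_Ici x₀) hgcont.continuousOn
    intro x hx
    rw [interior_Ici] at hx
    rw [(hG x).deriv]
    have h1 : 0 < α + β * x := by nlinarith [lt_trans hx₀pos hx]
    have h2 : 2 * lam < Real.exp (α * x + β / 2 * x ^ 2) := by
      have := humono x₀ x (le_of_lt hx₀pos) hx
      calc 2 * lam = Real.exp (Real.log (2 * lam)) := (Real.exp_log (by positivity)).symm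
        _ < Real.exp (α * x + β / 2 * x ^ 2) := by
            apply Real.exp_lt_exp.mpr; linarith [hux₀]
    exact mul_pos (mul_pos hβ h1) (sub_pos.mpr h2)
  -- sign of g at 0 and x₀
  have hg0 : 0 < g 0 := by
    have : g 0 = β + lam * (β - α ^ 2) := by simp [hg_def]
    rw [this]; nlinarith
  have hgx₀ : g x₀ < 0 := by
    have hformula : g x₀ = β * Real.exp (α * x₀ + β / 2 * x₀ ^ 2)
        + lam * (β - (α + β * x₀) ^ 2) := by rw [hg_def]
    rw [hformula, hux₀, Real.exp_log (by positivity)]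
    have hsq : (α + β * x₀) ^ 2 = α ^ 2 + 2 * β * Real.log (2 * lam) := by
      linear_combination 2 * β * hux₀
    have hc3' : 3 * β - α ^ 2 < 2 * β * Real.log (2 * lam) := by
      rw [div_lt_iff₀ (by linarith)] at hc3; linarith
    rw [hsq]; nlinarith
  -- first root x₁ ∈ (0, x₀)
  obtain ⟨x₁, hx₁mem, hgx₁⟩ := intermediate_value_Icc' (le_of_lt hx₀pos)
    hgcont.continuousOn ⟨le_of_lt hgx₀, le_of_lt hg0⟩
  have hx₁pos : 0 < x₁ := by
    rcases lt_or_eq_of_le hx₁mem.1 with hlt | heq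
    · exact hlt
    · exfalso; rw [← heq] at hgx₁; linarith
  have hx₁ltx₀ : x₁ < x₀ := by
    rcases lt_or_eq_of_le hx₁mem.2 with hlt | heq
    · exact hlt
    · exfalso; rw [heq] at hgx₁; linarith
  -- a large point M with g M > 0
  obtain ⟨t, ht1, ht16, ht8, htlog⟩ :
      ∃ t : ℝ, 1 ≤ t ∧ 16 * lam ≤ t ∧ 8 * lam * α ^ 2 ≤ β * t ∧ Real.log (2 * lam) < t := by
    refine ⟨1 + 16 * lam + 8 * lam * α ^ 2 / β + Real.log (2 * lam), ?_, ?_, ?_, ?_⟩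
    · have h1 : 0 ≤ 8 * lam * α ^ 2 / β := by positivity
      linarith
    · have h1 : 0 ≤ 8 * lam * α ^ 2 / β := by positivity
      linarith
    · have h1 : 8 * lam * α ^ 2 / β ≤ 1 + 16 * lam + 8 * lam * α ^ 2 / β + Real.log (2 * lam) := by
        linarith
      rw [div_le_iff₀ hβ] at h1
      linarith
    · have h1 : 0 ≤ 8 * lam * α ^ 2 / β := by positivity
      linarith
  have htpos : 0 < t := by linarith
  have hImage2 := intermediate_value_Icc (le_of_lt (div_pos htpos hα)) hUcont.continuousOn
  have hmemI2 : t ∈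
      Icc ((fun x : ℝ => α * x + β / 2 * x ^ 2) 0)
        ((fun x : ℝ => α * x + β / 2 * x ^ 2) (t / α)) := by
    constructor
    · simp; positivity
    · simp only
      rw [mul_div_cancel₀ _ (ne_of_gt hα)]
      nlinarith [sq_nonneg (t / α)]
  obtain ⟨M, hMmem, huM'⟩ := hImage2 hmemI2
  have huM : α * M + β / 2 * M ^ 2 = t := huM'
  have hMgtx₀ : x₀ < M := by
    by_contra hco
    push_neg at hco
    rcases lt_or_eq_of_le hco with hlt | heq
    · have := humono M x₀ hMmem.1 hlt
      rw [huM, hux₀] at this; linarith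
    · rw [heq] at huM; rw [hux₀] at huM; linarith
  have hgM : 0 < g M := by
    have hexpt : (1 + t / 2) ^ 2 ≤ Real.exp t := by
      have h1 := Real.add_one_le_exp (t / 2)
      have h2 : Real.exp t = Real.exp (t / 2) * Real.exp (t / 2) := by
        rw [← Real.exp_add]; ring_nf
      have h3 : 0 ≤ 1 + t / 2 := by linarith
      nlinarith [mul_le_mul h1 h1 (by linarith : (0:ℝ) ≤ t / 2 + 1) (Real.exp_pos (t / 2)).le, h2]
    have hbt : 0 ≤ β * t := mul_nonneg hβ.le htpos.le
    have e1 : lam * α ^ 2 ≤ β * t ^ 2 / 8 := by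
      nlinarith [mul_nonneg hbt (sub_nonneg.mpr ht1), ht8]
    have e2 : 2 * lam * β * t ≤ β * t ^ 2 / 8 := by
      nlinarith [mul_le_mul_of_nonneg_left ht16 hbt]
    have hsq : (α + β * M) ^ 2 = α ^ 2 + 2 * β * t := by
      linear_combination 2 * β * huM
    have hformula : g M = β * Real.exp (α * M + β / 2 * M ^ 2)
        + lam * (β - (α + β * M) ^ 2) := by rw [hg_def]
    rw [hformula, huM, hsq]
    nlinarith
  -- second root x₂ ∈ (x₀, M]
  obtain ⟨x₂, hx₂mem, hgx₂⟩ := intermediate_value_Icc (le_of_lt hMgtx₀)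
    hgcont.continuousOn ⟨le_of_lt hgx₀, le_of_lt hgM⟩
  have hx₀ltx₂ : x₀ < x₂ := by
    rcases lt_or_eq_of_le hx₂mem.1 with hlt | heq
    · exact hlt
    · exfalso; rw [← heq] at hgx₂; linarith
  refine ⟨x₁, x₂, hx₁pos, lt_trans hx₁ltx₀ hx₀ltx₂, ?_, ?_, ?_⟩
  · -- increasing on [0, x₁]
    apply monotoneOn_of_deriv_nonneg (convex_Icc 0 x₁) hhdiff.continuous.continuousOn
      hhdiff.differentiableOn
    intro x hx
    rw [interior_Icc] at hx
    rw [hhderiv x]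
    have hgx : 0 ≤ g x := by
      have := hanti ⟨le_of_lt hx.1, le_trans (le_of_lt hx.2) (le_of_lt hx₁ltx₀)⟩
        ⟨le_of_lt hx₁pos, le_of_lt hx₁ltx₀⟩ hx.2
      linarith
    exact mul_nonneg (Real.exp_pos _).le hgx
  · -- decreasing on [x₁, x₂]
    apply antitoneOn_of_deriv_nonpos (convex_Icc x₁ x₂) hhdiff.continuous.continuousOn
      hhdiff.differentiableOn
    intro x hx
    rw [interior_Icc] at hx
    rw [hhderiv x]
    have hgx : g x ≤ 0 := by
      rcases le_or_gt x x₀ with hle | hlt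
      · have := hanti ⟨le_of_lt hx₁pos, le_of_lt hx₁ltx₀⟩
          ⟨le_of_lt (lt_trans hx₁pos hx.1), hle⟩ hx.1
        linarith
      · have := hmono (le_of_lt hlt) (mem_Ici.mpr (le_of_lt hx₀ltx₂)) hx.2
        linarith
    exact mul_nonpos_of_nonneg_of_nonpos (Real.exp_pos _).le hgx
  · -- increasing on [x₂, ∞)
    apply monotoneOn_of_deriv_nonneg (convex_Ici x₂) hhdiff.continuous.continuousOn
      hhdiff.differentiableOn
    intro x hx
    rw [interior_Ici] at hx
    rw [hhderiv x]
    have hgx : 0 ≤ g x := by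
      have := hmono (mem_Ici.mpr (le_of_lt hx₀ltx₂))
        (mem_Ici.mpr (le_of_lt (lt_trans hx₀ltx₂ hx))) hx
      linarith
    exact mul_nonneg (Real.exp_pos _).le hgx
end

section
/- Fix α, β, λ > 0 with α² < 3β, and set y₀ = (3β - α²)/(2β). Consider the function φ(y) = β + λ·(β - α² - 2βy)·exp(-y) on [0, ∞) (the derivative of the CLFRD hazard rate in the variable y = αx + (β/2)x²). Then φ is decreasing on [0, y₀] and increasing on [y₀, ∞), and its minimum value is φ(y₀) = β - 2βλ·exp(-y₀), which is nonnegative if and only if log(2λ) ≤ y₀. (Key lemma in the proof of Theorem 2.) -/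
open Set

/-- Key lemma in the proof of Theorem 2: with `α² < 3β` and `y₀ = (3β - α²)/(2β)`,
the function `φ(y) = β + λ(β - α² - 2βy) e^{-y}` is decreasing on `[0, y₀]` and
increasing on `[y₀, ∞)`, its minimum value is `φ(y₀) = β - 2βλ e^{-y₀}`, and this
minimum is nonnegative iff `log(2λ) ≤ y₀`. -/
theorem clfrd_phi_lemma (α β lam : ℝ) (hα : 0 < α) (hβ : 0 < β) (hlam : 0 < lam)
    (hc : α ^ 2 < 3 * β)
    (φ : ℝ → ℝ)
    (hφ : ∀ y, φ y = β + lam * (β - α ^ 2 - 2 * β * y) * Real.exp (-y))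
    (y₀ : ℝ) (hy₀ : y₀ = (3 * β - α ^ 2) / (2 * β)) :
    AntitoneOn φ (Icc 0 y₀) ∧ MonotoneOn φ (Ici y₀) ∧
      φ y₀ = β - 2 * β * lam * Real.exp (-y₀) ∧
      (0 ≤ φ y₀ ↔ Real.log (2 * lam) ≤ y₀) := by
  have hφ' : φ = fun y => β + lam * (β - α ^ 2 - 2 * β * y) * Real.exp (-y) := funext hφ
  subst hφ'
  have h2β : (0:ℝ) < 2 * β := by linarith
  have hyval : 2 * β * y₀ = 3 * β - α ^ 2 := by
    rw [hy₀]; field_simp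
  have hd : ∀ y : ℝ, HasDerivAt (fun y => β + lam * (β - α ^ 2 - 2 * β * y) * Real.exp (-y))
      (2 * β * lam * Real.exp (-y) * (y - y₀)) y := by
    intro y
    have h1 : HasDerivAt (fun y : ℝ => β - α ^ 2 - 2 * β * y) (-(2 * β)) y := by
      simpa using ((hasDerivAt_id y).const_mul (2 * β)).const_sub (β - α ^ 2)
    have h2 : HasDerivAt (fun y : ℝ => Real.exp (-y)) (-Real.exp (-y)) y := by
      simpa using (hasDerivAt_neg y).exp
    have h3 := ((h1.mul h2).const_mul lam).const_add β
    have h4 : 2 * β * (y - y₀) = 2 * β * y - (3 * β - α ^ 2) := by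
      rw [mul_sub, hyval]
    have heq : lam * (-(2 * β) * Real.exp (-y) + (β - α ^ 2 - 2 * β * y) * -Real.exp (-y))
        = 2 * β * lam * Real.exp (-y) * (y - y₀) := by
      linear_combination lam * Real.exp (-y) * h4 + 2 * lam * Real.exp (-y) * hyval
    rw [heq] at h3
    simpa [mul_assoc] using h3
  have hcont : Continuous (fun y => β + lam * (β - α ^ 2 - 2 * β * y) * Real.exp (-y)) := by
    continuity
  have hdiff : Differentiable ℝ (fun y => β + lam * (β - α ^ 2 - 2 * β * y) * Real.exp (-y)) :=
    fun y => (hd y).differentiableAt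
  have hderiv : ∀ y : ℝ, deriv (fun y => β + lam * (β - α ^ 2 - 2 * β * y) * Real.exp (-y)) y
      = 2 * β * lam * Real.exp (-y) * (y - y₀) := fun y => (hd y).deriv
  refine ⟨?_, ?_, ?_, ?_⟩
  · apply antitoneOn_of_deriv_nonpos (convex_Icc 0 y₀) hcont.continuousOn
      (fun y _ => (hdiff y).differentiableWithinAt)
    intro y hy
    rw [interior_Icc] at hy
    rw [hderiv]
    have : y - y₀ ≤ 0 := by linarith [hy.2]
    have hpos : 0 < 2 * β * lam * Real.exp (-y) := by positivity
    nlinarith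
  · apply monotoneOn_of_deriv_nonneg (convex_Ici y₀) hcont.continuousOn
      (fun y _ => (hdiff y).differentiableWithinAt)
    intro y hy
    rw [interior_Ici] at hy
    rw [hderiv]
    have : 0 ≤ y - y₀ := by linarith [le_of_lt (mem_Ioi.mp hy)]
    positivity
  · have : β - α ^ 2 - 2 * β * y₀ = -(2 * β) := by rw [hyval]; ring
    simp only [this]; ring
  · have hval : β - α ^ 2 - 2 * β * y₀ = -(2 * β) := by rw [hyval]; ring
    simp only [hval]
    have hexp : 0 < Real.exp (-y₀) := Real.exp_pos _
    constructor
    · intro h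
      have h2 : 2 * lam * Real.exp (-y₀) ≤ 1 := by nlinarith
      rw [Real.log_le_iff_le_exp (by positivity : (0:ℝ) < 2 * lam)]
      have : 2 * lam ≤ Real.exp y₀ := by
        have he : Real.exp (-y₀) * Real.exp y₀ = 1 := by
          rw [← Real.exp_add]; simp
        nlinarith [Real.exp_pos y₀]
      exact this
    · intro h
      have h2 : 2 * lam ≤ Real.exp y₀ := (Real.log_le_iff_le_exp (by positivity)).mp h
      have he : Real.exp (-y₀) * Real.exp y₀ = 1 := by
        rw [← Real.exp_add]; simp
      have h3 : 2 * lam * Real.exp (-y₀) ≤ 1 := by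
        nlinarith [mul_le_mul_of_nonneg_right h2 hexp.le]
      nlinarith [h3]
end

section
/- Fix α, β, λ > 0 and let Q ∈ (0, 1). Suppose w ≥ 0 satisfies w·exp(w) = λ·(1 - Q)·exp(λ) (i.e., w = W₀(λ(1-Q)·exp(λ)) is the principal Lambert W value). Then w - λ - log(1 - Q) ≥ 0, and the point x_Q = (1/β)·(-α + √(α² + 2β·(w - λ - log(1 - Q)))) satisfies x_Q ≥ 0 and G(x_Q) = Q, where G is the CLFRD cumulative distribution function. (Theorem 3: the Q-th quantile of the CLFRD.) -/
/-- Theorem 3 (quantile of the CLFRD): if `Q ∈ (0,1)` and `w ≥ 0` satisfies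
`w e^w = λ(1-Q)e^λ` (the principal Lambert W value), then
`w - λ - log(1-Q) ≥ 0` and `x_Q = (1/β)(-α + √(α² + 2β(w - λ - log(1-Q))))`
satisfies `x_Q ≥ 0` and `G(x_Q) = Q`. -/
theorem clfrd_quantile (α β lam : ℝ) (hα : 0 < α) (hβ : 0 < β) (hlam : 0 < lam)
    (G : ℝ → ℝ)
    (hG : ∀ x, G x = 1 -
      Real.exp (-α * x - β / 2 * x ^ 2 - lam + lam * Real.exp (-α * x - β / 2 * x ^ 2)))
    (Q : ℝ) (hQ : Q ∈ Set.Ioo (0 : ℝ) 1)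
    (w : ℝ) (hw : 0 ≤ w)
    (hwe : w * Real.exp w = lam * (1 - Q) * Real.exp lam) :
    0 ≤ w - lam - Real.log (1 - Q) ∧
      0 ≤ β⁻¹ * (-α + Real.sqrt (α ^ 2 + 2 * β * (w - lam - Real.log (1 - Q)))) ∧
      G (β⁻¹ * (-α + Real.sqrt (α ^ 2 + 2 * β * (w - lam - Real.log (1 - Q))))) = Q := by
  obtain ⟨hQ0, hQ1⟩ := hQ
  have h1Q : 0 < 1 - Q := by linarith
  have hwpos : 0 < w := by
    have h1 : 0 < lam * (1 - Q) * Real.exp lam := by positivity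
    nlinarith [Real.exp_pos w]
  have hlog : Real.log w + w = Real.log lam + Real.log (1 - Q) + lam := by
    have h := congrArg Real.log hwe
    rw [Real.log_mul hwpos.ne' (Real.exp_ne_zero w), Real.log_exp,
      Real.log_mul (by positivity) (Real.exp_ne_zero lam),
      Real.log_mul hlam.ne' h1Q.ne', Real.log_exp] at h
    linarith
  have hwle : w ≤ lam := by
    by_contra h
    push_neg at h
    have he : Real.exp lam < Real.exp w := Real.exp_lt_exp.mpr h
    have h2 : lam * Real.exp lam < w * Real.exp w := by nlinarith [Real.exp_pos lam]
    nlinarith [mul_pos (mul_pos hlam (Real.exp_pos lam)) hQ0]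
  set t := w - lam - Real.log (1 - Q) with ht_def
  have ht : t = Real.log lam - Real.log w := by rw [ht_def]; linarith
  have ht0 : 0 ≤ t := by
    rw [ht]
    have := Real.log_le_log hwpos hwle
    linarith
  have hexpt : Real.exp (-t) = w / lam := by
    rw [ht, neg_sub, Real.exp_sub, Real.exp_log hwpos, Real.exp_log hlam]
  set s := Real.sqrt (α ^ 2 + 2 * β * t) with hs_def
  have hs2 : s ^ 2 = α ^ 2 + 2 * β * t := Real.sq_sqrt (by positivity)
  have hsnn : 0 ≤ s := Real.sqrt_nonneg _
  have hαs : α ≤ s := by nlinarith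
  set x := β⁻¹ * (-α + s) with hx_def
  have hxnn : 0 ≤ x := by
    rw [hx_def]
    have : 0 ≤ -α + s := by linarith
    positivity
  have hxt : -α * x - β / 2 * x ^ 2 = -t := by
    rw [hx_def]
    field_simp
    nlinarith [hs2]
  refine ⟨ht0, hxnn, ?_⟩
  rw [hG, hxt, hexpt]
  have harg : -t - lam + lam * (w / lam) = Real.log (1 - Q) := by
    field_simp
    linarith
  rw [harg, Real.exp_log h1Q]
  ring
end

section
/- Fix α, β, λ > 0. Suppose w ≥ 0 satisfies w·exp(w) = (λ/2)·exp(λ). Then the point x_MD = (1/β)·(-α + √(α² + 2β·(w - λ + log 2))) satisfies G(x_MD) = 1/2, where G is the CLFRD cumulative distribution function; i.e., x_MD is the median of the CLFRD. -/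
/-- The median of the CLFRD: if `w ≥ 0` satisfies `w e^w = (λ/2) e^λ`, then
`x_MD = (1/β)(-α + √(α² + 2β(w - λ + log 2)))` satisfies `G(x_MD) = 1/2`. -/
theorem clfrd_median (α β lam : ℝ) (hα : 0 < α) (hβ : 0 < β) (hlam : 0 < lam)
    (G : ℝ → ℝ)
    (hG : ∀ x, G x = 1 -
      Real.exp (-α * x - β / 2 * x ^ 2 - lam + lam * Real.exp (-α * x - β / 2 * x ^ 2)))
    (w : ℝ) (hw : 0 ≤ w)
    (hwe : w * Real.exp w = lam / 2 * Real.exp lam) :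
    G (β⁻¹ * (-α + Real.sqrt (α ^ 2 + 2 * β * (w - lam + Real.log 2)))) = 1 / 2 := by
  rw [hG]
  set c := w - lam + Real.log 2 with hc
  have hlog2 : 0 < Real.log 2 := Real.log_pos (by norm_num)
  have hc0 : 0 ≤ c := by
    rcases le_or_gt lam (Real.log 2) with h | h
    · rw [hc]; linarith
    · have ha0 : 0 ≤ lam - Real.log 2 := by linarith
      have haw : lam - Real.log 2 ≤ w := by
        by_contra hcon
        push_neg at hcon
        have hlt : w * Real.exp w < (lam - Real.log 2) * Real.exp (lam - Real.log 2) :=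
          mul_lt_mul' hcon.le (Real.exp_lt_exp.mpr hcon) (Real.exp_pos w).le
            (lt_of_le_of_lt hw hcon)
        have hea : Real.exp (lam - Real.log 2) = Real.exp lam / 2 := by
          rw [Real.exp_sub, Real.exp_log two_pos]
        rw [hea, hwe] at hlt
        nlinarith [Real.exp_pos lam]
      rw [hc]; linarith
  have harg : 0 ≤ α ^ 2 + 2 * β * c := by positivity
  set s := Real.sqrt (α ^ 2 + 2 * β * c) with hs
  have hs2 : s ^ 2 = α ^ 2 + 2 * β * c := Real.sq_sqrt harg
  set x := β⁻¹ * (-α + s) with hx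
  have hquad : -α * x - β / 2 * x ^ 2 = -c := by
    have hβ' : β ≠ 0 := hβ.ne'
    rw [hx]
    field_simp
    nlinarith [hs2]
  rw [hquad]
  have hw' : lam * Real.exp (-c) = w := by
    have h2 : Real.exp (-c) = Real.exp lam / (2 * Real.exp w) := by
      rw [hc, show -(w - lam + Real.log 2) = lam - w - Real.log 2 by ring,
        Real.exp_sub, Real.exp_sub, Real.exp_log two_pos]
      ring
    rw [h2]
    have hne : Real.exp w ≠ 0 := (Real.exp_pos w).ne'
    field_simp
    nlinarith [Real.exp_pos w]
  rw [hw', show -c - lam + w = -Real.log 2 by rw [hc]; ring,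
    Real.exp_neg, Real.exp_log two_pos]
  norm_num
end

section
/- Let α₁, β₁, λ₁ > 0 and α₂, β₂, λ₂ > 0 with α₁ ≤ α₂, β₁ ≤ β₂, and λ₁ ≤ λ₂. Then for every x ≥ 0 the CLFRD survival functions satisfy Ḡ₁(x) ≥ Ḡ₂(x), where Ḡᵢ(x) = exp(-αᵢx - (βᵢ/2)x² - λᵢ + λᵢ·exp(-αᵢx - (βᵢ/2)x²)); that is, CLFRD(α₁, β₁, λ₁) dominates CLFRD(α₂, β₂, λ₂) in the usual stochastic order. (Consequence of Theorem 4 noted in the Remark.) -/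
/-- Usual stochastic order: if `α₁ ≤ α₂`, `β₁ ≤ β₂`, `λ₁ ≤ λ₂`, then the CLFRD survival
functions satisfy `Ḡ₁(x) ≥ Ḡ₂(x)` for all `x ≥ 0`. -/
theorem clfrd_stochastic_order (α₁ β₁ lam₁ α₂ β₂ lam₂ : ℝ)
    (hα₁ : 0 < α₁) (hβ₁ : 0 < β₁) (hlam₁ : 0 < lam₁)
    (hα₂ : 0 < α₂) (hβ₂ : 0 < β₂) (hlam₂ : 0 < lam₂)
    (hα : α₁ ≤ α₂) (hβ : β₁ ≤ β₂) (hlam : lam₁ ≤ lam₂) :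
    ∀ x : ℝ, 0 ≤ x →
      Real.exp (-α₂ * x - β₂ / 2 * x ^ 2 - lam₂ +
          lam₂ * Real.exp (-α₂ * x - β₂ / 2 * x ^ 2)) ≤
        Real.exp (-α₁ * x - β₁ / 2 * x ^ 2 - lam₁ +
          lam₁ * Real.exp (-α₁ * x - β₁ / 2 * x ^ 2)) := by
  intro x hx
  set t₁ := -α₁ * x - β₁ / 2 * x ^ 2 with ht₁
  set t₂ := -α₂ * x - β₂ / 2 * x ^ 2 with ht₂
  have ht : t₂ ≤ t₁ := by
    rw [ht₁, ht₂]
    nlinarith [mul_nonneg (sub_nonneg.mpr hα) hx, mul_nonneg (sub_nonneg.mpr hβ) (sq_nonneg x)]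
  have ht₁0 : t₁ ≤ 0 := by
    rw [ht₁]
    nlinarith [mul_nonneg hα₁.le hx, mul_nonneg hβ₁.le (sq_nonneg x)]
  have he : Real.exp t₂ ≤ Real.exp t₁ := Real.exp_le_exp.mpr ht
  have he1 : Real.exp t₂ ≤ 1 := by
    calc Real.exp t₂ ≤ Real.exp 0 := Real.exp_le_exp.mpr (ht.trans ht₁0)
    _ = 1 := Real.exp_zero
  apply Real.exp_le_exp.mpr
  nlinarith [he, he1, ht, hlam, hlam₁.le]
end
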